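/- arXiv:math/0511118 — 2 statements merged into one kernel-verified Lean document; each statement's English description precedes it below -/
import Mathlib

section
/- Suppose A, B ∈ ℝ satisfy A·α₁ + B·α₀ = −2β₀ and A·α₂ + B·α₁ = −2β₁, and define F(z) := 2(1+z)·p_c(−1) + ∫_{−1}^{z} h(t)(z − t) dt. Then F''(z) = h(z) for all z ∈ ℝ, F(−1) = F(1) = 0, F'(−1) = 2·p_c(−1), and F'(1) = −2·p_c(1). -/
/-!
Since `∫_{-1}^z h(t)(z - t) dt = z ∫_{-1}^z h - ∫_{-1}^z t h(t) dt`, the function `F` is differentiable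
with `F'(z) = 2 p_c(-1) + ∫_{-1}^z h` and `F'' = h`; this gives `F(-1) = 0` and `F'(-1) = 2 p_c(-1)`
at once. The conditions at `1` only involve the moments `∫_{-1}^1 h` and `∫_{-1}^1 t h(t) dt`, and
since `∫_{-1}^1 h(t) t^r dt = A α_{r+1} + B α_r + 2 (β_r - p_c(1) - (-1)^r p_c(-1))`, the linear
system for `(A, B)` is exactly what makes them `-2 p_c(1) ∓ 2 p_c(-1)`.
-/

open intervalIntegral

section
variable {f : ℝ → ℝ}

theorem integral_mul_sub_eq (hf : Continuous f) (a z : ℝ) :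
    ∫ t in a..z, f t * (z - t) = z * (∫ t in a..z, f t) - ∫ t in a..z, f t * t := by
  simp_rw [mul_sub]
  rw [integral_sub ((hf.mul_const z).intervalIntegrable _ _)
    (Continuous.intervalIntegrable (by fun_prop) _ _), integral_mul_const, mul_comm]

theorem hasDerivAt_integral_mul_sub (hf : Continuous f) (a z : ℝ) :
    HasDerivAt (fun z => ∫ t in a..z, f t * (z - t)) (∫ t in a..z, f t) z := by
  have hf' : Continuous fun t => f t * t := hf.mul continuous_id
  have hG : HasDerivAt (fun z => ∫ t in a..z, f t) (f z) z :=
    integral_hasDerivAt_right (hf.intervalIntegrable _ _) (hf.stronglyMeasurableAtFilter _ _)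
      hf.continuousAt
  have hH : HasDerivAt (fun z => ∫ t in a..z, f t * t) (f z * z) z :=
    integral_hasDerivAt_right (hf'.intervalIntegrable _ _) (hf'.stronglyMeasurableAtFilter _ _)
      hf'.continuousAt
  rw [funext (integral_mul_sub_eq hf a)]
  exact (((hasDerivAt_id' z).mul hG).sub hH).congr_deriv (by ring)

end

theorem integral_affine_mul_add_mul_pow {p q : ℝ → ℝ} (hp : Continuous p) (hq : Continuous q)
    (A B c a b : ℝ) (r : ℕ) :
    ∫ t in a..b, ((A * t + B) * p t + c * q t) * t ^ r =
      A * (∫ t in a..b, p t * t ^ (r + 1)) + B * (∫ t in a..b, p t * t ^ r) +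
        c * ∫ t in a..b, q t * t ^ r := by
  have expand : ∀ t, ((A * t + B) * p t + c * q t) * t ^ r =
      A * (p t * t ^ (r + 1)) + B * (p t * t ^ r) + c * (q t * t ^ r) := fun t => by ring
  simp_rw [expand]
  rw [integral_add (Continuous.intervalIntegrable (by fun_prop) _ _)
      (Continuous.intervalIntegrable (by fun_prop) _ _),
    integral_add (Continuous.intervalIntegrable (by fun_prop) _ _)
      (Continuous.intervalIntegrable (by fun_prop) _ _)]
  simp only [integral_const_mul]

theorem stmt2_general {ι : Type*} [Fintype ι] [DecidableEq ι]
    (x : ι → ℝ) (d : ι → ℕ) (s : ι → ℝ)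
    (pc : ℝ → ℝ) (hpc : ∀ t, pc t = ∏ a, (1 + x a * t) ^ d a)
    (α : ℕ → ℝ) (hα : ∀ r, α r = ∫ t in (-1:ℝ)..1, pc t * t ^ r)
    (β : ℕ → ℝ)
    (hβ : ∀ r, β r = pc 1 + (-1:ℝ) ^ r * pc (-1) +
      ∫ t in (-1:ℝ)..1, (∑ a, (d a : ℝ) * s a * x a * (1 + x a * t) ^ (d a - 1) *
        ∏ b ∈ Finset.univ.erase a, (1 + x b * t) ^ d b) * t ^ r)
    (A B : ℝ)
    (h : ℝ → ℝ)
    (hh : ∀ t, h t = (A * t + B) * pc t +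
      ∑ a, 2 * (d a : ℝ) * s a * x a * (1 + x a * t) ^ (d a - 1) *
        ∏ b ∈ Finset.univ.erase a, (1 + x b * t) ^ d b)
    (hAB1 : A * α 1 + B * α 0 = -2 * β 0)
    (hAB2 : A * α 2 + B * α 1 = -2 * β 1)
    (F : ℝ → ℝ)
    (hF : ∀ z, F z = 2 * (1 + z) * pc (-1) + ∫ t in (-1:ℝ)..z, h t * (z - t)) :
    ∃ F' : ℝ → ℝ, (∀ z, HasDerivAt F (F' z) z) ∧ (∀ z, HasDerivAt F' (h z) z) ∧
      F (-1) = 0 ∧ F 1 = 0 ∧ F' (-1) = 2 * pc (-1) ∧ F' 1 = -2 * pc 1 := by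
  set S : ℝ → ℝ := fun t => ∑ a, (d a : ℝ) * s a * x a * (1 + x a * t) ^ (d a - 1) *
    ∏ b ∈ Finset.univ.erase a, (1 + x b * t) ^ d b
  have hpc_cont : Continuous pc := by rw [funext hpc]; fun_prop
  have h_eq : h = fun t => (A * t + B) * pc t + 2 * S t := by
    ext t
    simp only [hh, S, Finset.mul_sum, mul_assoc]
  have h_cont : Continuous h := by rw [h_eq]; fun_prop
  have moment (r : ℕ) : ∫ t in (-1:ℝ)..1, h t * t ^ r =
      A * α (r + 1) + B * α r + 2 * (β r - pc 1 - (-1) ^ r * pc (-1)) := by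
    rw [h_eq, integral_affine_mul_add_mul_pow hpc_cont (by fun_prop), hα, hα, hβ]
    ring
  have integral_h : ∫ t in (-1:ℝ)..1, h t = -2 * pc 1 - 2 * pc (-1) := by
    have h0 := moment 0
    simp only [pow_zero, mul_one, zero_add] at h0
    linear_combination h0 + hAB1
  have integral_h_mul : ∫ t in (-1:ℝ)..1, h t * t = -2 * pc 1 + 2 * pc (-1) := by
    have h1 := moment 1
    simp only [pow_one, Nat.reduceAdd] at h1
    linear_combination h1 + hAB2
  refine ⟨fun z => 2 * pc (-1) + ∫ t in (-1:ℝ)..z, h t, fun z => ?_, fun z => ?_, ?_, ?_, ?_, ?_⟩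
  · rw [funext hF]
    exact ((((hasDerivAt_id' z).const_add 1).const_mul 2).mul_const _).add
      (hasDerivAt_integral_mul_sub h_cont _ z) |>.congr_deriv (by ring)
  · exact (integral_hasDerivAt_right (h_cont.intervalIntegrable _ _)
      (h_cont.stronglyMeasurableAtFilter _ _) h_cont.continuousAt).const_add _
  · simp [hF]
  · rw [hF, integral_mul_sub_eq h_cont, integral_h, integral_h_mul]
    ring
  · simp
  · simp only [integral_h]
    ring

/-- if `(A,B)` solves the linear system, then
`F(z) = 2(1+z) p_c(-1) + ∫_{-1}^z h(t)(z-t) dt` satisfies `F'' = h`, `F(±1) = 0`,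
`F'(-1) = 2 p_c(-1)` and `F'(1) = -2 p_c(1)`. -/
theorem stmt2 {ι : Type*} [Fintype ι] [DecidableEq ι] [Nonempty ι]
    (x : ι → ℝ) (hx1 : ∀ a, |x a| ≤ 1) (hx0 : ∀ a, x a ≠ 0)
    (d : ι → ℕ) (hd : ∀ a, 1 ≤ d a) (s : ι → ℝ)
    (pc : ℝ → ℝ) (hpc : ∀ t, pc t = ∏ a, (1 + x a * t) ^ d a)
    (α : ℕ → ℝ) (hα : ∀ r, α r = ∫ t in (-1:ℝ)..1, pc t * t ^ r)
    (β : ℕ → ℝ)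
    (hβ : ∀ r, β r = pc 1 + (-1:ℝ) ^ r * pc (-1) +
      ∫ t in (-1:ℝ)..1, (∑ a, (d a : ℝ) * s a * x a * (1 + x a * t) ^ (d a - 1) *
        ∏ b ∈ Finset.univ.erase a, (1 + x b * t) ^ d b) * t ^ r)
    (A B : ℝ)
    (h : ℝ → ℝ)
    (hh : ∀ t, h t = (A * t + B) * pc t +
      ∑ a, 2 * (d a : ℝ) * s a * x a * (1 + x a * t) ^ (d a - 1) *
        ∏ b ∈ Finset.univ.erase a, (1 + x b * t) ^ d b)
    (hAB1 : A * α 1 + B * α 0 = -2 * β 0)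
    (hAB2 : A * α 2 + B * α 1 = -2 * β 1)
    (F : ℝ → ℝ)
    (hF : ∀ z, F z = 2 * (1 + z) * pc (-1) + ∫ t in (-1:ℝ)..z, h t * (z - t)) :
    ∃ F' : ℝ → ℝ, (∀ z, HasDerivAt F (F' z) z) ∧ (∀ z, HasDerivAt F' (h z) z) ∧
      F (-1) = 0 ∧ F 1 = 0 ∧ F' (-1) = 2 * pc (-1) ∧ F' 1 = -2 * pc 1 :=
  stmt2_general x d s pc hpc α hα β hβ A B h hh hAB1 hAB2 F hF
end

section
/- Let d₀, d_∞ ∈ ℕ and s ∈ ℝ. (i) If s ≥ −d₀(d₀+1), then for every x ∈ (0,1) one has c(s,x) ≥ −x/2, and consequently (1+xz) + c(s,x)(1−z²) > 0 for every z ∈ (−1,1). (ii) If s ≤ d_∞(d_∞+1), then for every x ∈ (−1,0) one has c(s,x) ≥ x/2, and consequently (1+xz) + c(s,x)(1−z²) > 0 for every z ∈ (−1,1). -/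
/-- Denominator of the coefficient of the extremal polynomial over a CSC Riemann surface. -/
noncomputable def Dden (d₀ d₁ : ℕ) (x : ℝ) : ℝ :=
  (2 + (d₀ : ℝ) * (1 + x) + (d₁ : ℝ) * (1 - x)) *
    (4 + (d₀ : ℝ) * (1 + x) + (d₁ : ℝ) * (1 - x)) +
  (4 + (d₀ : ℝ) + (d₁ : ℝ)) * (1 - x ^ 2)

/-- The coefficient `c(s,x)` of the extremal polynomial. -/
noncomputable def cCoeff (d₀ d₁ : ℕ) (s x : ℝ) : ℝ :=
  -(2 * x ^ 2 * (2 + (d₀ : ℝ) * (1 + x) + (d₁ : ℝ) * (1 - x) - s * x)) / Dden d₀ d₁ x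

lemma Dden_pos (d₀ d₁ : ℕ) {x : ℝ} (h1 : -1 < x) (h2 : x < 1) : 0 < Dden d₀ d₁ x := by
  have ha : (0:ℝ) ≤ (d₀:ℝ) := Nat.cast_nonneg _
  have hb : (0:ℝ) ≤ (d₁:ℝ) := Nat.cast_nonneg _
  have h3 : (0:ℝ) ≤ (d₀:ℝ) * (1 + x) := mul_nonneg ha (by linarith)
  have h4 : (0:ℝ) ≤ (d₁:ℝ) * (1 - x) := mul_nonneg hb (by linarith)
  have h5 : (0:ℝ) < (1 + x) * (1 - x) := mul_pos (by linarith) (by linarith)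
  unfold Dden
  nlinarith [mul_nonneg h3 h4, mul_nonneg h3 h3, mul_nonneg h4 h4]

lemma cCoeff_lb1 (d₀ d₁ : ℕ) {s x : ℝ} (hs : -((d₀:ℝ) * ((d₀:ℝ) + 1)) ≤ s)
    (hx0 : 0 < x) (hx1 : x < 1) : -x / 2 ≤ cCoeff d₀ d₁ s x := by
  set a := (d₀:ℝ) with ha'
  set b := (d₁:ℝ) with hb'
  have ha : (0:ℝ) ≤ a := Nat.cast_nonneg _
  have hb : (0:ℝ) ≤ b := Nat.cast_nonneg _
  have hD : 0 < Dden d₀ d₁ x := Dden_pos d₀ d₁ (by linarith) hx1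
  have hbr : (0:ℝ) ≤ (1 - x) *
      (4*(3+x) + b*(7-3*x) + b^2*(1-x) + a*(7+9*x) + 2*a*b*(1+x) + a^2*(1+3*x)) := by
    apply mul_nonneg (by linarith)
    nlinarith [sq_nonneg a, sq_nonneg b, mul_nonneg ha hb, mul_nonneg ha hx0.le,
      mul_nonneg hb hx0.le, mul_nonneg (mul_nonneg ha hb) hx0.le,
      mul_nonneg (sq_nonneg a) hx0.le]
  have hsx : -(a*(a+1)) * x^2 ≤ s * x^2 :=
    mul_le_mul_of_nonneg_right hs (sq_nonneg x)
  have hkey : 4*x*(2 + a*(1+x) + b*(1-x) - s*x) ≤ Dden d₀ d₁ x := by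
    unfold Dden
    rw [← ha', ← hb']
    nlinarith [hbr, hsx]
  have h2 : 2 * x ^ 2 * (2 + a*(1+x) + b*(1-x) - s * x) / Dden d₀ d₁ x ≤ x / 2 := by
    rw [div_le_div_iff₀ hD (by norm_num : (0:ℝ) < 2)]
    nlinarith [mul_le_mul_of_nonneg_left hkey hx0.le]
  unfold cCoeff
  rw [← ha', ← hb', neg_div, neg_div]
  linarith

lemma cCoeff_lb2 (d₀ d₁ : ℕ) {s x : ℝ} (hs : s ≤ (d₁:ℝ) * ((d₁:ℝ) + 1))
    (hx0 : -1 < x) (hx1 : x < 0) : x / 2 ≤ cCoeff d₀ d₁ s x := by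
  set a := (d₀:ℝ) with ha'
  set b := (d₁:ℝ) with hb'
  have ha : (0:ℝ) ≤ a := Nat.cast_nonneg _
  have hb : (0:ℝ) ≤ b := Nat.cast_nonneg _
  have hD : 0 < Dden d₀ d₁ x := Dden_pos d₀ d₁ hx0 (by linarith)
  have hnx : (0:ℝ) < -x := by linarith
  have hbr : (0:ℝ) ≤ (1 + x) *
      (4*(3-x) + a*(7+3*x) + a^2*(1+x) + b*(7-9*x) + 2*a*b*(1-x) + b^2*(1-3*x)) := by
    apply mul_nonneg (by linarith)
    nlinarith [sq_nonneg a, sq_nonneg b, mul_nonneg ha hb, mul_nonneg ha hnx.le,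
      mul_nonneg hb hnx.le, mul_nonneg (mul_nonneg ha hb) hnx.le,
      mul_nonneg (sq_nonneg b) hnx.le]
  have hsx : s * x^2 ≤ (b*(b+1)) * x^2 :=
    mul_le_mul_of_nonneg_right hs (sq_nonneg x)
  have hkey : -(4*x)*(2 + a*(1+x) + b*(1-x) - s*x) ≤ Dden d₀ d₁ x := by
    unfold Dden
    rw [← ha', ← hb']
    nlinarith [hbr, hsx]
  have h2 : 2 * x ^ 2 * (2 + a*(1+x) + b*(1-x) - s * x) / Dden d₀ d₁ x ≤ -x / 2 := by
    rw [div_le_div_iff₀ hD (by norm_num : (0:ℝ) < 2)]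
    nlinarith [mul_le_mul_of_nonneg_left hkey hnx.le]
  unfold cCoeff
  rw [← ha', ← hb', neg_div]
  linarith

lemma pos1 {x c z : ℝ} (hx0 : 0 < x) (hx1 : x < 1) (hc : -x / 2 ≤ c)
    (hz1 : -1 < z) (hz2 : z < 1) : 0 < (1 + x * z) + c * (1 - z ^ 2) := by
  have hz : (0:ℝ) ≤ 1 - z ^ 2 := by nlinarith [mul_pos (show (0:ℝ) < 1 - z by linarith) (show (0:ℝ) < 1 + z by linarith)]
  nlinarith [mul_nonneg (show (0:ℝ) ≤ c + x / 2 by linarith) hz,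
    mul_nonneg hx0.le (sq_nonneg (z + 1))]

lemma pos2 {x c z : ℝ} (hx0 : -1 < x) (hx1 : x < 0) (hc : x / 2 ≤ c)
    (hz1 : -1 < z) (hz2 : z < 1) : 0 < (1 + x * z) + c * (1 - z ^ 2) := by
  have hz : (0:ℝ) ≤ 1 - z ^ 2 := by nlinarith [mul_pos (show (0:ℝ) < 1 - z by linarith) (show (0:ℝ) < 1 + z by linarith)]
  nlinarith [mul_nonneg (show (0:ℝ) ≤ c - x / 2 by linarith) hz,
    mul_nonneg (show (0:ℝ) ≤ -x by linarith) (sq_nonneg (z - 1))]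

/-- existence range for admissible extremal metrics over a CSC
Riemann surface: bounds on `c(s,x)` and positivity of `(1+xz)+c(s,x)(1-z²)` on `(-1,1)`. -/
theorem stmt10 (d₀ d₁ : ℕ) (s : ℝ) :
    ((-((d₀ : ℝ) * ((d₀ : ℝ) + 1)) ≤ s) → ∀ x ∈ Set.Ioo (0:ℝ) 1,
      -x / 2 ≤ cCoeff d₀ d₁ s x ∧
      ∀ z ∈ Set.Ioo (-1:ℝ) 1, 0 < (1 + x * z) + cCoeff d₀ d₁ s x * (1 - z ^ 2)) ∧
    ((s ≤ (d₁ : ℝ) * ((d₁ : ℝ) + 1)) → ∀ x ∈ Set.Ioo (-1:ℝ) 0,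
      x / 2 ≤ cCoeff d₀ d₁ s x ∧
      ∀ z ∈ Set.Ioo (-1:ℝ) 1, 0 < (1 + x * z) + cCoeff d₀ d₁ s x * (1 - z ^ 2)) := by
  constructor
  · intro hs x hx
    have hc := cCoeff_lb1 d₀ d₁ hs hx.1 hx.2
    exact ⟨hc, fun z hz => pos1 hx.1 hx.2 hc hz.1 hz.2⟩
  · intro hs x hx
    have hc := cCoeff_lb2 d₀ d₁ hs hx.1 hx.2
    exact ⟨hc, fun z hz => pos2 hx.1 hx.2 hc hz.1 hz.2⟩
end
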